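/- arXiv:1409.1839 — 2 statements merged into one kernel-verified Lean document; each statement's English description precedes it below -/
import Mathlib

section
/- Let f = (f_0, …, f_{n−1}) be a tuple of functions from a set I to a set M, identified with the function f : I → M^n. Then the Boolean subalgebra π(f) of P(I) is atomic: every nonempty member of π(f) contains an atom of π(f) (equivalently, every member of π(f) is the union of the atoms of π(f) it contains). -/
/-- `𝒜` is a field of sets on `α`: it contains `∅` and `α` and is closed under finite unions,
finite intersections and complements. -/
def IsSetField {α : Type*} (𝒜 : Set (Set α)) : Prop :=
  ∅ ∈ 𝒜 ∧ Set.univ ∈ 𝒜 ∧ (∀ A ∈ 𝒜, ∀ B ∈ 𝒜, A ∪ B ∈ 𝒜) ∧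
    (∀ A ∈ 𝒜, ∀ B ∈ 𝒜, A ∩ B ∈ 𝒜) ∧ (∀ A ∈ 𝒜, Aᶜ ∈ 𝒜)

/-- The field of sets on `α` generated by the family `G`. -/
def genSetField {α : Type*} (G : Set (Set α)) : Set (Set α) :=
  ⋂₀ {𝒜 | IsSetField 𝒜 ∧ G ⊆ 𝒜}

/-- The finite–cofinite field of sets on `M`. -/
def finCofin (M : Type*) : Set (Set M) :=
  {A : Set M | A.Finite ∨ Aᶜ.Finite}

/-- The `n`-th product of the finite–cofinite field on `M`: the field of sets on `M^n`
generated by products of members of the finite–cofinite field. -/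
def prodFinCofin (M : Type*) (n : ℕ) : Set (Set (Fin n → M)) :=
  genSetField {S : Set (Fin n → M) |
    ∃ A : Fin n → Set M, (∀ i, A i ∈ finCofin M) ∧ S = {x | ∀ i, x i ∈ A i}}

/-- The Boolean algebra (field of sets on `I`) generated by a tuple of functions from `I`
to `M`, viewed as a single function `f : I → M^n`. -/
def pialg {I M : Type*} {n : ℕ} (f : I → Fin n → M) : Set (Set I) :=
  {S : Set I | ∃ A ∈ prodFinCofin M n, S = f ⁻¹' A}

/-- `a` is an atom of the Boolean subalgebra `S` of the power set of `I`: a nonempty member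
of `S` containing no proper nonempty member of `S`. -/
def AtomIn {I : Type*} (S : Set (Set I)) (a : Set I) : Prop :=
  a ∈ S ∧ a ≠ ∅ ∧ ∀ b ∈ S, b ⊆ a → b = ∅ ∨ b = a

/-- A singleton in `M^n` belongs to the product field: it is a product of singletons. -/
lemma singleton_mem_prodFinCofin (M : Type*) (n : ℕ) (v : Fin n → M) :
    {v} ∈ prodFinCofin M n := by
  intro 𝒜 h𝒜
  apply h𝒜.2
  refine ⟨fun i => {v i}, fun i => Or.inl (Set.finite_singleton _), ?_⟩
  ext y
  simp [funext_iff, eq_comm]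

/-- Each fiber of `f` is an atom of `pialg f`. -/
lemma fiber_atom {I M : Type*} {n : ℕ} (f : I → Fin n → M) (x : I) :
    AtomIn (pialg f) (f ⁻¹' {f x}) := by
  refine ⟨⟨{f x}, singleton_mem_prodFinCofin M n (f x), rfl⟩, ?_, ?_⟩
  · intro h
    have : x ∈ f ⁻¹' {f x} := rfl
    rw [h] at this
    exact this
  · rintro b ⟨B, hB, rfl⟩ hsub
    rcases Set.eq_empty_or_nonempty (f ⁻¹' B) with h | ⟨z, hz⟩
    · exact Or.inl h
    · right
      have hzv : f z = f x := hsub hz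
      have hvB : f x ∈ B := hzv ▸ hz
      ext w
      constructor
      · exact fun hw => hsub hw
      · intro hw
        have : f w = f x := hw
        simpa [Set.mem_preimage, this] using hvB

theorem pialg_atomic
    {I M : Type*} {n : ℕ} (f : I → Fin n → M) :
    (∀ S ∈ pialg f, S ≠ ∅ → ∃ a, AtomIn (pialg f) a ∧ a ⊆ S) ∧
    (∀ S ∈ pialg f, S = ⋃₀ {a : Set I | AtomIn (pialg f) a ∧ a ⊆ S}) := by
  have key : ∀ S ∈ pialg f, ∀ x ∈ S, f ⁻¹' {f x} ⊆ S := by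
    rintro S ⟨A, hA, rfl⟩ x hx w hw
    have : f w = f x := hw
    simpa [Set.mem_preimage, this] using hx
  constructor
  · intro S hS hne
    obtain ⟨x, hx⟩ := Set.nonempty_iff_ne_empty.2 hne
    exact ⟨f ⁻¹' {f x}, fiber_atom f x, key S hS x hx⟩
  · intro S hS
    ext x
    constructor
    · intro hx
      exact ⟨f ⁻¹' {f x}, ⟨fiber_atom f x, key S hS x hx⟩, rfl⟩
    · rintro ⟨a, ⟨_, haS⟩, hxa⟩
      exact haS hxa
end

section
/- Let f = (f_0, …, f_{n−1}) be a tuple of functions from a set I to a set M, identified with the function f : I → M^n. Then π(f) is a regular subalgebra of the power set algebra P(I): whenever a family (C_t)_{t∈T} of members of π(f) has a least upper bound C within the ordered set π(f), then C = ⋃_{t∈T} C_t. -/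
/-- `C` is a least upper bound of the family `𝒯` within the subalgebra `S` of the power
set of `I` (ordered by inclusion). -/
def LubIn {I : Type*} (S 𝒯 : Set (Set I)) (C : Set I) : Prop :=
  C ∈ S ∧ (∀ T ∈ 𝒯, T ⊆ C) ∧ ∀ U ∈ S, (∀ T ∈ 𝒯, T ⊆ U) → C ⊆ U

lemma isSetField_genSetField {α : Type*} (G : Set (Set α)) : IsSetField (genSetField G) := by
  refine ⟨?_, ?_, ?_, ?_, ?_⟩
  · intro 𝒜 h𝒜; exact h𝒜.1.1
  · intro 𝒜 h𝒜; exact h𝒜.1.2.1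
  · intro A hA B hB 𝒜 h𝒜; exact h𝒜.1.2.2.1 A (hA 𝒜 h𝒜) B (hB 𝒜 h𝒜)
  · intro A hA B hB 𝒜 h𝒜; exact h𝒜.1.2.2.2.1 A (hA 𝒜 h𝒜) B (hB 𝒜 h𝒜)
  · intro A hA 𝒜 h𝒜; exact h𝒜.1.2.2.2.2 A (hA 𝒜 h𝒜)

lemma subset_genSetField {α : Type*} (G : Set (Set α)) : G ⊆ genSetField G := by
  intro A hA 𝒜 h𝒜; exact h𝒜.2 hA

/-- `π(f)` is a regular subalgebra of the power set algebra `P(I)`: any least upper bound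
within `π(f)` of a family of members of `π(f)` is the union of the family. -/
theorem pialg_regular_in_powerset
    {I M : Type*} {n : ℕ} (f : I → Fin n → M) :
    ∀ 𝒯 ⊆ pialg f, ∀ C : Set I, LubIn (pialg f) 𝒯 C → C = ⋃₀ 𝒯 := by
  intro 𝒯 h𝒯 C hC
  obtain ⟨hCmem, hub, hlub⟩ := hC
  apply Set.Subset.antisymm _ (Set.sUnion_subset hub)
  intro x hxC
  by_contra hx
  -- the singleton fiber of `f x`
  set D : Set I := f ⁻¹' {y | ∀ i, y i = f x i} with hD
  have hDmem : D ∈ pialg f := by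
    refine ⟨{y | ∀ i, y i = f x i}, ?_, rfl⟩
    apply subset_genSetField
    exact ⟨fun i => {f x i}, fun i => Or.inl (Set.finite_singleton _), rfl⟩
  -- U = C \ D is in the algebra and is an upper bound of 𝒯
  obtain ⟨A, hA, hCA⟩ := hCmem
  obtain ⟨B, hB, hDB⟩ := hDmem
  have hfield := isSetField_genSetField
    {S : Set (Fin n → M) | ∃ A : Fin n → Set M, (∀ i, A i ∈ finCofin M) ∧ S = {x | ∀ i, x i ∈ A i}}
  have hU : C ∩ Dᶜ ∈ pialg f := by
    refine ⟨A ∩ Bᶜ, hfield.2.2.2.1 A hA _ (hfield.2.2.2.2 B hB), ?_⟩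
    rw [hCA, hDB]; rfl
  have hub' : ∀ T ∈ 𝒯, T ⊆ C ∩ Dᶜ := by
    intro T hT y hy
    refine ⟨hub T hT hy, ?_⟩
    intro hyD
    obtain ⟨E, _, hTE⟩ := h𝒯 hT
    have hfy : f y = f x := funext hyD
    have : x ∈ T := by
      rw [hTE] at hy ⊢
      simpa [Set.mem_preimage, ← hfy] using hy
    exact hx ⟨T, hT, this⟩
  have := hlub _ hU hub' hxC
  exact this.2 (fun i => rfl)
end
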